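/- Let L be a c-lattice, j a proper element, 𝔛 = (j], and suppose L_* \ (i] is an 𝔛-multiplicatively closed subset of L for a proper element i. Then i is an 𝔛-element of L. -/

import Mathlib

/-- A multiplicative lattice: a complete lattice with a commutative, associative
multiplication distributing over arbitrary joins, with top as identity. -/
class MultiplicativeLattice (L : Type*) extends CompleteLattice L, CommMonoid L where
  mul_sSup : ∀ (a : L) (S : Set L), a * sSup S = ⨆ b ∈ S, a * b
  one_eq_top : (1 : L) = ⊤

namespace MultiplicativeLattice

variable {L : Type*}

/-- A subset is M-closed if it is closed under multiplication. -/
def MClosed [MultiplicativeLattice L] (X : Set L) : Prop :=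
  ∀ a ∈ X, ∀ b ∈ X, a * b ∈ X

/-- A proper element `i` is an `X`-element if `a * b ≤ i` and `a ∉ X` imply `b ≤ i`. -/
def IsXElement [MultiplicativeLattice L] (X : Set L) (i : L) : Prop :=
  i ≠ ⊤ ∧ ∀ a b : L, a * b ≤ i → a ∉ X → b ≤ i

/-- A prime element. -/
def IsPrime [MultiplicativeLattice L] (p : L) : Prop :=
  p ≠ ⊤ ∧ ∀ a b : L, a * b ≤ p → a ≤ p ∨ b ≤ p

/-- The residual `(i : a) = ⋁ {x | x * a ≤ i}`. -/
def residual [MultiplicativeLattice L] (i a : L) : L := sSup {x : L | x * a ≤ i}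

/-- The radical of an element. -/
def radical [MultiplicativeLattice L] (a : L) : L :=
  sSup {x : L | IsCompactElement x ∧ ∃ n : ℕ, x ^ (n + 1) ≤ a}

/-- A primary element. -/
def IsPrimary [MultiplicativeLattice L] (i : L) : Prop :=
  i ≠ ⊤ ∧ ∀ a b : L, a * b ≤ i → a ≤ i ∨ b ≤ radical i

/-- A minimal prime element. -/
def IsMinimalPrime [MultiplicativeLattice L] (p : L) : Prop :=
  IsPrime p ∧ ∀ q : L, IsPrime q → q ≤ p → q = p

/-- An `X`-multiplicatively closed subset: a nonempty set `A` of compact elements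
containing `L_* \ X`, with `a₁ ∈ L_* \ X` and `a₂ ∈ A` implying `a₁ * a₂ ∈ A`. -/
def IsXMultClosed [MultiplicativeLattice L] (X A : Set L) : Prop :=
  A.Nonempty ∧ (∀ a ∈ A, IsCompactElement a) ∧
    ({c : L | IsCompactElement c} \ X) ⊆ A ∧
    ∀ a₁ ∈ ({c : L | IsCompactElement c} \ X), ∀ a₂ ∈ A, a₁ * a₂ ∈ A

end MultiplicativeLattice

/-- A c-lattice: a compactly generated multiplicative lattice in which `⊤` is compact
and the product of compact elements is compact. -/
class CLattice (L : Type*) extends MultiplicativeLattice L where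
  compactlyGenerated : ∀ x : L,
    x = sSup {c : L | IsCompactElement c ∧ c ≤ x}
  compact_top : IsCompactElement (⊤ : L)
  compact_mul : ∀ a b : L, IsCompactElement a →
    IsCompactElement b → IsCompactElement (a * b)

open MultiplicativeLattice CompleteLattice

namespace MultiplicativeLattice

variable {L : Type*} [MultiplicativeLattice L]

theorem mul_sup (a b c : L) : a * (b ⊔ c) = a * b ⊔ a * c := by
  rw [← sSup_pair, mul_sSup, iSup_pair]

theorem mul_le_mul_left {b c : L} (h : b ≤ c) (a : L) : a * b ≤ a * c := by
  rw [← sup_eq_right.mpr h, mul_sup]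
  exact le_sup_left

theorem mul_le_mul {a b c d : L} (hab : a ≤ b) (hcd : c ≤ d) : a * c ≤ b * d :=
  calc a * c ≤ a * d := mul_le_mul_left hcd a
    _ = d * a := mul_comm a d
    _ ≤ d * b := mul_le_mul_left hab d
    _ = b * d := mul_comm d b

end MultiplicativeLattice

namespace CLattice

theorem exists_compact_le_not_le {L : Type*} [CLattice L] {x y : L} (h : ¬ x ≤ y) :
    ∃ c, IsCompactElement c ∧ c ≤ x ∧ ¬ c ≤ y := by
  by_contra! hc
  refine h ((compactlyGenerated x).trans_le (sSup_le ?_))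
  rintro c ⟨hc_compact, hcx⟩
  exact hc c hc_compact hcx

end CLattice

theorem stmt18_general {L : Type*} [CLattice L] (j i : L) (hi : i ≠ ⊤)
    (hA : IsXMultClosed {x : L | x ≤ j}
      {c : L | IsCompactElement c ∧ ¬ c ≤ i}) :
    IsXElement {x : L | x ≤ j} i := by
  refine ⟨hi, fun a b hab ha => ?_⟩
  by_contra hb
  obtain ⟨a', ha'_compact, ha'a, ha'j⟩ := CLattice.exists_compact_le_not_le ha
  obtain ⟨b', hb'_compact, hb'b, hb'i⟩ := CLattice.exists_compact_le_not_le hb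
  have hprod : a' * b' ∈ {c : L | IsCompactElement c ∧ ¬ c ≤ i} :=
    hA.2.2.2 a' ⟨ha'_compact, ha'j⟩ b' ⟨hb'_compact, hb'i⟩
  exact hprod.2 ((MultiplicativeLattice.mul_le_mul ha'a hb'b).trans hab)

theorem stmt18 {L : Type*} [CLattice L] (j i : L) (hj : j ≠ ⊤) (hi : i ≠ ⊤)
    (hA : IsXMultClosed {x : L | x ≤ j}
      {c : L | IsCompactElement c ∧ ¬ c ≤ i}) :
    IsXElement {x : L | x ≤ j} i :=
  stmt18_general j i hi hA
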